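/- arXiv:cs/0106036 — 4 statements merged into one kernel-verified Lean document; each statement's English description precedes it below -/
import Mathlib

section
/- (Upper bound on cumulative relative entropy) If ξ = Σ_i w_i μ_i with w_μ > 0 the weight of the true distribution μ ∈ M, then for every n, the cumulative expected conditional relative entropy H_n := Σ_{k=1}^n Σ_{x_{<k}} μ(x_{<k}) · Σ_{x_k} μ(x_k|x_{<k}) ln(μ(x_k|x_{<k})/ξ(x_k|x_{<k})) satisfies H_n = Σ_{x_{1:n}} μ(x_{1:n}) ln(μ(x_{1:n})/ξ(x_{1:n})) ≤ ln(1/w_μ). -/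
open scoped BigOperators

/-- Conditional probability ρ(a | l) := ρ(l·a)/ρ(l) via Bayes' rule. -/
noncomputable def condP {A : Type} [Fintype A] (ρ : List A → ℝ) (l : List A) (a : A) : ℝ :=
  ρ (l ++ [a]) / ρ l

/-- Cumulative expected conditional relative entropy H_n between μ and ξ. -/
noncomputable def relEnt {A : Type} [Fintype A] (μ ξ : List A → ℝ) (n : ℕ) : ℝ :=
  ∑ k ∈ Finset.range n, ∑ x : Fin k → A, μ (List.ofFn x) *
    ∑ a : A, condP μ (List.ofFn x) a * Real.log (condP μ (List.ofFn x) a / condP ξ (List.ofFn x) a)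

/-!
Bayes' rule turns the conditional log-ratio at `x_{<k}a` into the difference of the joint
log-ratios at `x_{<k}a` and at `x_{<k}`, so the cumulative conditional relative entropy
telescopes to the relative entropy of `μ` and `ξ` on strings of length `n`, minus the term at
the empty string, which vanishes because `μ [] = ξ [] = 1`. Since `ξ ≥ w_μ μ` pointwise, each
log-ratio `log (μ/ξ)` is at most `log (1/w_μ)`, and `μ` has total mass `1` on strings of
length `n`.
-/

open Finset Real

theorem List.ofFn_fin_snoc {A : Type} {n : ℕ} (y : Fin n → A) (a : A) :
    List.ofFn (Fin.snoc y a) = List.ofFn y ++ [a] := by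
  rw [List.ofFn_succ']
  simp [List.concat_eq_append]

theorem sum_mul_log_div_le_of_mul_le {ι : Type*} (s : Finset ι) {p q : ι → ℝ} {c : ℝ}
    (hc : 0 < c) (hp : ∀ i, 0 ≤ p i) (hpq : ∀ i, c * p i ≤ q i) :
    ∑ i ∈ s, p i * log (p i / q i) ≤ (∑ i ∈ s, p i) * log (1 / c) := by
  rw [sum_mul]
  refine sum_le_sum fun i _ => ?_
  rcases (hp i).eq_or_lt with hpi | hpi
  · simp [← hpi]
  have hqi : 0 < q i := (mul_pos hc hpi).trans_le (hpq i)
  refine mul_le_mul_of_nonneg_left (log_le_log (div_pos hpi hqi) ?_) hpi.le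
  rw [div_le_div_iff₀ hqi hc, one_mul, mul_comm]
  exact hpq i

theorem le_tsum_mul_of_le_one {ι : Type*} {w f : ι → ℝ} (hw : Summable w) (hw0 : ∀ i, 0 ≤ w i)
    (hf0 : ∀ i, 0 ≤ f i) (hf1 : ∀ i, f i ≤ 1) (j : ι) :
    w j * f j ≤ ∑' i, w i * f i :=
  (Summable.of_nonneg_of_le (fun i => mul_nonneg (hw0 i) (hf0 i))
      (fun i => mul_le_of_le_one_right (hw0 i) (hf1 i)) hw).le_tsum j
    fun i _ => mul_nonneg (hw0 i) (hf0 i)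

section Prefix

variable {A : Type} [Fintype A]

theorem sum_ofFn_succ {M : Type*} [AddCommMonoid M] (n : ℕ) (g : List A → M) :
    ∑ x : Fin (n + 1) → A, g (List.ofFn x) = ∑ y : Fin n → A, ∑ a, g (List.ofFn y ++ [a]) := by
  rw [← (Fin.snocEquiv fun _ => A).sum_comp, Fintype.sum_prod_type, sum_comm]
  exact sum_congr rfl fun y _ => sum_congr rfl fun a _ => congrArg g (List.ofFn_fin_snoc y a)

variable {μ ξ : List A → ℝ}

theorem sum_ofFn_eq_nil (hμ : ∀ l, ∑ a, μ (l ++ [a]) = μ l) (n : ℕ) :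
    ∑ x : Fin n → A, μ (List.ofFn x) = μ [] := by
  induction n with
  | zero => simp
  | succ n ih => simp only [sum_ofFn_succ, hμ, ih]

theorem le_nil_of_sum_append_eq (hnn : ∀ l, 0 ≤ μ l) (hμ : ∀ l, ∑ a, μ (l ++ [a]) = μ l)
    (l : List A) : μ l ≤ μ [] := by
  induction l using List.reverseRecOn with
  | nil => exact le_rfl
  | append_singleton l a ih =>
    rw [← hμ l] at ih
    exact (single_le_sum (fun b _ => hnn (l ++ [b])) (mem_univ a)).trans ih

theorem mul_sum_condP_mul_log_eq_sub (hnn : ∀ l, 0 ≤ μ l) (hμ : ∀ l, ∑ a, μ (l ++ [a]) = μ l)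
    (hac : ∀ l, 0 < μ l → 0 < ξ l) (l : List A) :
    μ l * ∑ a, condP μ l a * log (condP μ l a / condP ξ l a) =
      ∑ a, μ (l ++ [a]) * log (μ (l ++ [a]) / ξ (l ++ [a])) - μ l * log (μ l / ξ l) := by
  rcases (hnn l).eq_or_lt with hl | hl
  · have hext : ∀ a, μ (l ++ [a]) = 0 := fun a =>
      (sum_eq_zero_iff_of_nonneg fun b _ => hnn (l ++ [b])).1 ((hμ l).trans hl.symm) a
        (mem_univ a)
    simp [← hl, hext]
  have term : ∀ a, μ l * (condP μ l a * log (condP μ l a / condP ξ l a)) =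
      μ (l ++ [a]) * log (μ (l ++ [a]) / ξ (l ++ [a])) - μ (l ++ [a]) * log (μ l / ξ l) := by
    intro a
    rcases (hnn (l ++ [a])).eq_or_lt with ha | ha
    · simp [condP, ← ha]
    have hξl := hac l hl
    have hξa := hac _ ha
    rw [condP, condP, div_div_div_comm, log_div (by positivity) (by positivity), ← mul_assoc,
      mul_div_cancel₀ _ hl.ne', mul_sub]
  rw [mul_sum, sum_congr rfl fun a _ => term a, sum_sub_distrib, ← sum_mul, hμ]

theorem relEnt_eq_sub (hnn : ∀ l, 0 ≤ μ l) (hμ : ∀ l, ∑ a, μ (l ++ [a]) = μ l)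
    (hac : ∀ l, 0 < μ l → 0 < ξ l) (n : ℕ) :
    relEnt μ ξ n = ∑ x : Fin n → A, μ (List.ofFn x) * log (μ (List.ofFn x) / ξ (List.ofFn x))
      - μ [] * log (μ [] / ξ []) := by
  induction n with
  | zero => simp [relEnt]
  | succ n ih =>
    rw [relEnt, sum_range_succ, ← relEnt, ih, sum_ofFn_succ n fun l => μ l * log (μ l / ξ l)]
    simp only [mul_sum_condP_mul_log_eq_sub hnn hμ hac, sum_sub_distrib]
    ring

end Prefix

/-- Upper bound on the cumulative relative entropy: H_n equals the total KL divergence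
between μ and ξ on length-n strings, and is bounded by ln(1/w_μ). -/
theorem relEnt_eq_and_le {A : Type} [Fintype A]
    (μs : ℕ → List A → ℝ) (w : ℕ → ℝ)
    (hwpos : ∀ i, 0 < w i) (hwsum : HasSum w 1)
    (hnn : ∀ i l, 0 ≤ μs i l)
    (hroot : ∀ i, μs i [] = 1)
    (hcompat : ∀ i l, ∑ a : A, μs i (l ++ [a]) = μs i l)
    (ξ : List A → ℝ) (hξ : ∀ l, ξ l = ∑' i, w i * μs i l)
    (i0 : ℕ)
    (n : ℕ) :
    relEnt (μs i0) ξ n =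
      (∑ x : Fin n → A, μs i0 (List.ofFn x) *
        Real.log (μs i0 (List.ofFn x) / ξ (List.ofFn x))) ∧
    (∑ x : Fin n → A, μs i0 (List.ofFn x) *
        Real.log (μs i0 (List.ofFn x) / ξ (List.ofFn x))) ≤ Real.log (1 / w i0) := by
  have hle1 (i : ℕ) (l : List A) : μs i l ≤ 1 :=
    hroot i ▸ le_nil_of_sum_append_eq (hnn i) (hcompat i) l
  have hdom (l : List A) : w i0 * μs i0 l ≤ ξ l :=
    hξ l ▸ le_tsum_mul_of_le_one hwsum.summable (fun i => (hwpos i).le) (hnn · l) (hle1 · l) i0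
  have hξnil : ξ [] = 1 := by simp [hξ, hroot, hwsum.tsum_eq]
  have hac (l : List A) (hl : 0 < μs i0 l) : 0 < ξ l := (mul_pos (hwpos i0) hl).trans_le (hdom l)
  refine ⟨by simp [relEnt_eq_sub (hnn i0) (hcompat i0) hac, hroot, hξnil], ?_⟩
  calc _ ≤ (∑ x : Fin n → A, μs i0 (List.ofFn x)) * log (1 / w i0) :=
        sum_mul_log_div_le_of_mul_le _ (hwpos i0) (fun x => hnn i0 _) fun x => hdom _
    _ = log (1 / w i0) := by rw [sum_ofFn_eq_nil (hcompat i0), hroot, one_mul]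
end

section
/- (Pointwise error-entropy inequality) Let y, z be probability vectors on {1,…,N}, let m maximize y and s maximize z, and let A > 0, B = A/4 + 1/A. Then (1 − y_s) ≤ (A+1)(1 − y_m) + (B+1)·Σ_{i=1}^N y_i ln(y_i/z_i). -/
/-!
Pointwise, `a log(a/b) - a + b ≥ 3(a - b)² / (2(a + 2b))`, a sharpened form of `log x ≥ 1 - 1/x`.
Cauchy–Schwarz with weights `(y_i + 2 z_i)/3`, which sum to `1`, turns this into Pinsker's
inequality `‖y - z‖₁² ≤ 2 D(y‖z)`. Since `y - z` sums to zero, each coordinate of `y - z` is at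
most `‖y - z‖₁ / 2`, so `y_m - y_s ≤ ‖y - z‖₁` and, when `s ≠ m` (so that `z_m ≤ 1/2`),
`2 y_m - 1 ≤ ‖y - z‖₁`. The theorem then reduces to the quadratic inequality
`(A + 2) S ≤ A + (B + 1) S²`, whose discriminant vanishes exactly for `B = A/4 + 1/A`.
-/

open Real Finset

noncomputable def logGap (x : ℝ) : ℝ := log x - (x - 1) * (5 * x + 1) / (2 * x * (x + 2))

lemma hasDerivAt_logGap {x : ℝ} (hx : 0 < x) :
    HasDerivAt logGap (4 * (x - 1) ^ 3 / (2 * x * (x + 2)) ^ 2) x := by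
  have hnum : HasDerivAt (fun t : ℝ => (t - 1) * (5 * t + 1)) (10 * x - 4) x :=
    (((hasDerivAt_id' x).sub_const 1).mul
      (((hasDerivAt_id' x).const_mul 5).add_const 1)).congr_deriv (by ring)
  have hden : HasDerivAt (fun t : ℝ => 2 * t * (t + 2)) (4 * x + 4) x :=
    (((hasDerivAt_id' x).const_mul 2).mul ((hasDerivAt_id' x).add_const 2)).congr_deriv
      (by ring)
  refine ((hasDerivAt_log hx.ne').sub (hnum.div hden (by positivity))).congr_deriv ?_
  field_simp
  ring

lemma logGap_nonneg {x : ℝ} (hx : 0 < x) : 0 ≤ logGap x := by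
  have hgap_one : logGap 1 = 0 := by simp [logGap]
  rcases le_total 1 x with h1 | h1
  · have hmono : MonotoneOn logGap (Set.Ici 1) := by
      refine monotoneOn_of_hasDerivWithinAt_nonneg (convex_Ici 1)
        (fun t ht => (hasDerivAt_logGap (one_pos.trans_le ht)).continuousAt.continuousWithinAt)
        (fun t ht => (hasDerivAt_logGap ?_).hasDerivWithinAt) (fun t ht => ?_) <;>
        rw [interior_Ici, Set.mem_Ioi] at ht
      · exact one_pos.trans ht
      · have : 0 ≤ t - 1 := by linarith
        positivity
    simpa [hgap_one] using hmono Set.self_mem_Ici h1 h1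
  · have hanti : AntitoneOn logGap (Set.Ioc 0 1) := by
      refine antitoneOn_of_hasDerivWithinAt_nonpos (convex_Ioc 0 1)
        (fun t ht => (hasDerivAt_logGap ht.1).continuousAt.continuousWithinAt)
        (fun t ht => (hasDerivAt_logGap ?_).hasDerivWithinAt) (fun t ht => ?_) <;>
        rw [interior_Ioc] at ht
      · exact ht.1
      · have : t - 1 ≤ 0 := by linarith [ht.2]
        exact div_nonpos_of_nonpos_of_nonneg (by nlinarith [sq_nonneg (t - 1)]) (by positivity)
    simpa [hgap_one] using hanti ⟨hx, h1⟩ ⟨one_pos, le_rfl⟩ h1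

lemma sub_one_mul_le_mul_log {x : ℝ} (hx : 0 < x) :
    (x - 1) * (5 * x + 1) ≤ 2 * x * (x + 2) * log x := by
  have h := logGap_nonneg hx
  rw [logGap, sub_nonneg, div_le_iff₀ (by positivity)] at h
  linarith

lemma three_mul_sq_sub_le_mul_log_div {a b : ℝ} (ha : 0 ≤ a) (hb : 0 < b) :
    3 * (a - b) ^ 2 ≤ 2 * (a + 2 * b) * (a * log (a / b) - a + b) := by
  rcases ha.eq_or_lt with rfl | ha
  · nlinarith
  have h := mul_le_mul_of_nonneg_left (sub_one_mul_le_mul_log (div_pos ha hb)) (sq_nonneg b)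
  have hnum : b ^ 2 * ((a / b - 1) * (5 * (a / b) + 1)) = (a - b) * (5 * a + b) := by
    field_simp
  have hden : b ^ 2 * (2 * (a / b) * (a / b + 2) * log (a / b)) =
      2 * a * (a + 2 * b) * log (a / b) := by
    field_simp
  rw [hnum, hden] at h
  nlinarith

lemma sub_le_mul_log_div {a b : ℝ} (ha : 0 ≤ a) (hb : 0 < b) : a - b ≤ a * log (a / b) := by
  have h := three_mul_sq_sub_le_mul_log_div ha hb
  have hpos : 0 < 2 * (a + 2 * b) := by positivity
  nlinarith [sq_nonneg (a - b)]

theorem sq_sum_abs_sub_le_two_mul_sum_mul_log_div {ι : Type*} [Fintype ι] {y z : ι → ℝ}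
    (hy : ∀ i, 0 ≤ y i) (hz : ∀ i, 0 ≤ z i) (hys : ∑ i, y i = 1) (hzs : ∑ i, z i = 1)
    (hac : ∀ i, z i = 0 → y i = 0) :
    (∑ i, |y i - z i|) ^ 2 ≤ 2 * ∑ i, y i * log (y i / z i) := by
  have hterm : ∀ i, 0 ≤ y i * log (y i / z i) - y i + z i ∧
      |y i - z i| ^ 2 ≤ 2 * (y i * log (y i / z i) - y i + z i) * ((y i + 2 * z i) / 3) := by
    intro i
    rcases (hz i).eq_or_lt with hz0 | hzi
    · simp [← hz0, hac i hz0.symm]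
    · have := three_mul_sq_sub_le_mul_log_div (hy i) hzi
      exact ⟨by linarith [sub_le_mul_log_div (hy i) hzi], by rw [sq_abs]; linarith⟩
  calc (∑ i, |y i - z i|) ^ 2
      ≤ (∑ i, 2 * (y i * log (y i / z i) - y i + z i)) * ∑ i, (y i + 2 * z i) / 3 :=
        sum_sq_le_sum_mul_sum_of_sq_le_mul _ (fun i _ => by linarith [(hterm i).1])
          (fun i _ => by linarith [hy i, hz i]) (fun i _ => (hterm i).2)
    _ = 2 * ∑ i, y i * log (y i / z i) := by
        simp only [← mul_sum, ← sum_div, sum_add_distrib, sum_sub_distrib, hys, hzs]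
        ring

lemma two_mul_sub_le_sum_abs_sub {ι : Type*} [Fintype ι] {y z : ι → ℝ}
    (h : ∑ j, y j = ∑ j, z j) (i : ι) : 2 * (y i - z i) ≤ ∑ j, |y j - z j| := by
  classical
  have hd : ∑ j, (y j - z j) = 0 := by rw [sum_sub_distrib, h, sub_self]
  rw [← add_sum_erase _ _ (mem_univ i)] at hd ⊢
  have hrest := (neg_le_abs _).trans (abs_sum_le_sum_abs (fun j => y j - z j) (univ.erase i))
  linarith [le_abs_self (y i - z i)]

lemma two_mul_le_one_of_le_of_ne {ι : Type*} [Fintype ι] {z : ι → ℝ} (hz : ∀ i, 0 ≤ z i)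
    (hzs : ∑ i, z i = 1) {i j : ι} (hij : i ≠ j) (hle : z i ≤ z j) : 2 * z i ≤ 1 := by
  have := add_le_sum (fun k _ => hz k) (mem_univ i) (mem_univ j) hij
  linarith

lemma add_two_mul_le_add_mul_sq {A : ℝ} (hA : 0 < A) (S : ℝ) :
    (A + 2) * S ≤ A + (A / 4 + 1 / A + 1) * S ^ 2 := by
  have hsq : A + (A / 4 + 1 / A + 1) * S ^ 2 - (A + 2) * S =
      ((A + 2) * S - 2 * A) ^ 2 / (4 * A) := by
    field_simp
    ring
  have : 0 ≤ ((A + 2) * S - 2 * A) ^ 2 / (4 * A) := by positivity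
  linarith

theorem pointwise_error_entropy_general {N : ℕ} (y z : Fin N → ℝ) (m s : Fin N)
    (hy : ∀ i, 0 ≤ y i) (hz : ∀ i, 0 ≤ z i)
    (hys : ∑ i, y i = 1) (hzs : ∑ i, z i = 1)
    (hac : ∀ i, z i = 0 → y i = 0)
    (hs : ∀ i, z i ≤ z s)
    (Ac Bc : ℝ) (hA : 0 < Ac) (hB : Bc = Ac / 4 + 1 / Ac) :
    1 - y s ≤ (Ac + 1) * (1 - y m) + (Bc + 1) * ∑ i, y i * Real.log (y i / z i) := by
  set S := ∑ i, |y i - z i|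
  set D := ∑ i, y i * log (y i / z i)
  have hpinsker : S ^ 2 ≤ 2 * D := sq_sum_abs_sub_le_two_mul_sum_mul_log_div hy hz hys hzs hac
  have hym_zm : 2 * (y m - z m) ≤ S := two_mul_sub_le_sum_abs_sub (hys.trans hzs.symm) m
  have hzs_ys : 2 * (z s - y s) ≤ S := by
    simpa only [abs_sub_comm] using two_mul_sub_le_sum_abs_sub (hzs.trans hys.symm) s
  have hym_le : y m ≤ 1 := hys ▸ single_le_sum (fun i _ => hy i) (mem_univ m)
  have hB1 : 0 < Bc + 1 := by rw [hB]; positivity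
  have hD : 0 ≤ (Bc + 1) * D := mul_nonneg hB1.le (by linarith [sq_nonneg S])
  rcases eq_or_ne m s with rfl | hms
  · linarith [mul_nonneg hA.le (sub_nonneg.2 hym_le)]
  have hzm : 2 * z m ≤ 1 := two_mul_le_one_of_le_of_ne hz hzs hms (hs m)
  have hquad := add_two_mul_le_add_mul_sq hA S
  rw [← hB] at hquad
  have hAS : Ac * (2 * y m - 1) ≤ Ac * S := mul_le_mul_of_nonneg_left (by linarith) hA.le
  linarith [mul_le_mul_of_nonneg_left hpinsker hB1.le, hs m]

/-- Pointwise error-entropy inequality: if m maximizes y and s maximizes z, then for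
A > 0 and B = A/4 + 1/A one has 1 − y_s ≤ (A+1)(1 − y_m) + (B+1)·D(y‖z). -/
theorem pointwise_error_entropy {N : ℕ} (y z : Fin N → ℝ) (m s : Fin N)
    (hy : ∀ i, 0 ≤ y i) (hz : ∀ i, 0 ≤ z i)
    (hys : ∑ i, y i = 1) (hzs : ∑ i, z i = 1)
    (hac : ∀ i, z i = 0 → y i = 0)
    (hm : ∀ i, y i ≤ y m) (hs : ∀ i, z i ≤ z s)
    (Ac Bc : ℝ) (hA : 0 < Ac) (hB : Bc = Ac / 4 + 1 / Ac) :
    1 - y s ≤ (Ac + 1) * (1 - y m) + (Bc + 1) * ∑ i, y i * Real.log (y i / z i) :=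
  pointwise_error_entropy_general y z m s hy hz hys hzs hac hs Ac Bc hA hB
end

section
/- (Linear error bound) For every A > 0 and B = A/4 + 1/A, the expected error counts satisfy E_{nΘ_ξ} ≤ (A+1)·E_{nΘ_μ} + (B+1)·H_n. -/
open scoped BigOperators

/-- Total μ-expected number of prediction errors in the first n predictions
of the deterministic predictor p. -/
noncomputable def errE {A : Type} [Fintype A] (μ : List A → ℝ) (p : List A → A) (n : ℕ) : ℝ :=
  ∑ k ∈ Finset.range n, ∑ x : Fin k → A,
    μ (List.ofFn x) * (1 - condP μ (List.ofFn x) (p (List.ofFn x)))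

/-!
At each step let `p`, `q` be the conditional distributions of `μ` and `ξ`, `y` the letter
predicted by `Θ_μ` and `z` the one predicted by `Θ_ξ`. Since `q z ≥ q y`,
`p y - p z ≤ |p y - q y| + |p z - q z|`. The Bernstein-type bound
`3 (p - q)² ≤ 2 (p + 2q) (p log (p/q) + q - p)`, combined over the two letters by
Cauchy–Schwarz, gives `(p y - p z)² ≤ 2 D (p y - p z + 2 (1 - p y))` with `D` the relative entropy
of the step. Minimising `A (1 - p y) + (A/4 + 1/A) D` over `A > 0` shows that this quadratic bound
is equivalent to `p y - p z ≤ A (1 - p y) + (A/4 + 1/A + 1) D` for every `A`. Weighting by `μ(x)`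
and summing over histories gives the theorem; `ξ` dominates `μ` since `w_μ > 0`.
-/

open Real InformationTheory Finset

lemma hasDerivAt_log_add_inv {x : ℝ} (hx : 0 < x) :
    HasDerivAt (fun y => log y + (4 * y)⁻¹ + 27 / (4 * (y + 2)))
      ((x - 1) ^ 3 / (x ^ 2 * (x + 2) ^ 2)) x := by
  have h4x : HasDerivAt (fun y : ℝ => 4 * y) 4 x := by simpa using (hasDerivAt_id x).const_mul 4
  have h4x2 : HasDerivAt (fun y : ℝ => 4 * (y + 2)) 4 x := by
    simpa using ((hasDerivAt_id x).add_const 2).const_mul 4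
  refine (((hasDerivAt_log hx.ne').fun_add (h4x.fun_inv (by positivity))).fun_add
    ((hasDerivAt_const x (27 : ℝ)).fun_div h4x2 (by positivity))).congr_deriv ?_
  field_simp
  ring

-- The left side minus `log x` is the partial-fraction form of `(x - 1)(5x + 1) / (2x(x + 2))`.
lemma five_halves_le_log_add_inv {x : ℝ} (hx : 0 < x) :
    5 / 2 ≤ log x + (4 * x)⁻¹ + 27 / (4 * (x + 2)) := by
  have hmin : IsMinOn (fun y => log y + (4 * y)⁻¹ + 27 / (4 * (y + 2))) (Set.Ioi 0) 1 := by
    refine isMinOn_Ioi_of_deriv (hasDerivAt_log_add_inv one_pos).continuousAt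
      (fun y hy => (hasDerivAt_log_add_inv hy.1).differentiableAt.differentiableWithinAt)
      (fun y hy =>
        (hasDerivAt_log_add_inv (one_pos.trans hy)).differentiableAt.differentiableWithinAt)
      (fun y hy => ?_) (fun y hy => ?_)
    · rw [(hasDerivAt_log_add_inv hy.1).deriv]
      exact div_nonpos_of_nonpos_of_nonneg (Odd.pow_nonpos (by decide) (by linarith [hy.2]))
        (by positivity)
    · rw [(hasDerivAt_log_add_inv (one_pos.trans hy)).deriv]
      exact div_nonneg (pow_nonneg (by linarith [Set.mem_Ioi.1 hy]) _) (by positivity)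
  convert hmin (Set.mem_Ioi.2 hx) using 1
  norm_num

-- With `x = 1 + u`: `(1 + u) log (1 + u) - u ≥ u² / (2 (1 + u/3))`, the estimate behind
-- Bernstein's inequality.
theorem three_mul_sq_sub_one_le_klFun {x : ℝ} (hx : 0 ≤ x) :
    3 * (x - 1) ^ 2 ≤ 2 * (x + 2) * klFun x := by
  rcases hx.eq_or_lt with rfl | hx
  · norm_num [klFun_zero]
  have hlog : (x - 1) * (5 * x + 1) ≤ 2 * x * (x + 2) * log x := by
    have h := mul_le_mul_of_nonneg_left (five_halves_le_log_add_inv hx)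
      (by positivity : (0 : ℝ) ≤ 2 * x * (x + 2))
    have hexpand : 2 * x * (x + 2) * (log x + (4 * x)⁻¹ + 27 / (4 * (x + 2)))
        = 2 * x * (x + 2) * log x + (x + 2) / 2 + 27 * x / 2 := by
      field_simp
      ring
    linarith
  rw [klFun_apply]
  linarith

lemma mul_log_div_add_sub_eq_mul_klFun (p : ℝ) {q : ℝ} (hq : q ≠ 0) :
    p * log (p / q) + q - p = q * klFun (p / q) := by
  rw [klFun_apply]
  field_simp

lemma mul_log_div_add_sub_nonneg {p q : ℝ} (hp : 0 ≤ p) (hq : 0 ≤ q) (hpq : 0 < p → 0 < q) :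
    0 ≤ p * log (p / q) + q - p := by
  rcases hq.eq_or_lt with rfl | hq
  · simp [le_antisymm (not_lt.1 fun h => (hpq h).false) hp]
  rw [mul_log_div_add_sub_eq_mul_klFun p hq.ne']
  exact mul_nonneg hq.le (klFun_nonneg (div_nonneg hp hq.le))

theorem three_mul_sq_sub_le {p q : ℝ} (hp : 0 ≤ p) (hq : 0 ≤ q) (hpq : 0 < p → 0 < q) :
    3 * (p - q) ^ 2 ≤ 2 * (p + 2 * q) * (p * log (p / q) + q - p) := by
  rcases hq.eq_or_lt with rfl | hq
  · simp [le_antisymm (not_lt.1 fun h => (hpq h).false) hp]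
  rw [mul_log_div_add_sub_eq_mul_klFun p hq.ne']
  calc 3 * (p - q) ^ 2 = q ^ 2 * (3 * (p / q - 1) ^ 2) := by field_simp
    _ ≤ q ^ 2 * (2 * (p / q + 2) * klFun (p / q)) :=
      mul_le_mul_of_nonneg_left (three_mul_sq_sub_one_le_klFun (div_nonneg hp hq.le)) (sq_nonneg q)
    _ = 2 * (p + 2 * q) * (q * klFun (p / q)) := by field_simp

lemma add_sq_le_add_mul_add {a b P Q f g : ℝ} (hP : 0 ≤ P) (hQ : 0 ≤ Q) (hf : 0 ≤ f)
    (hg : 0 ≤ g) (ha : a ^ 2 ≤ P * f) (hb : b ^ 2 ≤ Q * g) :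
    (a + b) ^ 2 ≤ (P + Q) * (f + g) := by
  have hab : (2 * (a * b)) ^ 2 ≤ (P * g + Q * f) ^ 2 := by
    nlinarith [mul_le_mul ha hb (sq_nonneg b) (by positivity), sq_nonneg (P * g - Q * f)]
  have := abs_le_of_sq_le_sq hab (by positivity)
  nlinarith [le_abs_self (2 * (a * b))]

lemma le_mul_add_of_sq_le {t u d A : ℝ} (hA : 0 < A) (hu : 0 ≤ u) (hd : 0 ≤ d)
    (h : 0 ≤ t → t ^ 2 ≤ 2 * d * (t + 2 * u)) :
    t ≤ A * u + (A / 4 + 1 / A + 1) * d := by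
  rcases le_or_gt t 0 with ht | ht
  · have : 0 ≤ A * u + (A / 4 + 1 / A + 1) * d := by positivity
    linarith
  have h := h ht.le
  have hd' : 0 < d := by nlinarith
  -- With `c = u + d/4`: `4c (A²c - A(t - d) + d) = (2Ac - (t - d))² + 4cd - (t - d)²`,
  -- and `h` says `(t - d)² ≤ 4cd`.
  have hquad : 0 ≤ A ^ 2 * (u + d / 4) - A * (t - d) + d :=
    nonneg_of_mul_nonneg_right (by nlinarith [sq_nonneg (2 * A * (u + d / 4) - (t - d))] :
      0 ≤ 4 * (u + d / 4) * (A ^ 2 * (u + d / 4) - A * (t - d) + d)) (by positivity)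
  have hexpand : A * (A * u + (A / 4 + 1 / A + 1) * d - t)
      = A ^ 2 * (u + d / 4) - A * (t - d) + d := by
    field_simp
    ring
  linarith [nonneg_of_mul_nonneg_right (hexpand ▸ hquad) hA]

lemma sub_sq_le_of_two_point {m m' s s' f f' d : ℝ} (hm : 0 ≤ m) (hm' : 0 ≤ m')
    (hmm' : m + m' ≤ 1) (hs : 0 ≤ s) (hss' : s ≤ s') (hss'1 : s + s' ≤ 1)
    (hf0 : 0 ≤ f) (hf0' : 0 ≤ f') (hf : 3 * (m - s) ^ 2 ≤ 2 * (m + 2 * s) * f)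
    (hf' : 3 * (m' - s') ^ 2 ≤ 2 * (m' + 2 * s') * f') (hd : f + f' ≤ d) (ht : 0 ≤ m - m') :
    (m - m') ^ 2 ≤ 2 * d * (m - m' + 2 * (1 - m)) := by
  have hcs := add_sq_le_add_mul_add (a := |m - s|) (b := |m' - s'|)
    (P := 2 * (m + 2 * s) / 3) (Q := 2 * (m' + 2 * s') / 3) (by linarith) (by linarith)
    hf0 hf0' (by rw [sq_abs]; linarith) (by rw [sq_abs]; linarith)
  have htri : m - m' ≤ |m - s| + |m' - s'| := by
    linarith [le_abs_self (m - s), neg_abs_le (m' - s')]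
  calc (m - m') ^ 2 ≤ (|m - s| + |m' - s'|) ^ 2 := pow_le_pow_left₀ ht htri 2
    _ ≤ (2 * (m + 2 * s) / 3 + 2 * (m' + 2 * s') / 3) * (f + f') := hcs
    _ ≤ 2 * (m - m' + 2 * (1 - m)) * d :=
      mul_le_mul (by linarith) hd (by positivity) (by linarith)
    _ = 2 * d * (m - m' + 2 * (1 - m)) := by ring

theorem sub_le_mul_one_sub_add_mul_sum_log {ι : Type*} [Fintype ι] {p q : ι → ℝ}
    (hp : ∀ i, 0 ≤ p i) (hq : ∀ i, 0 ≤ q i) (hp1 : ∑ i, p i = 1) (hq1 : ∑ i, q i = 1)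
    (hpq : ∀ i, 0 < p i → 0 < q i) {y z : ι} (hyz : q y ≤ q z) {A : ℝ} (hA : 0 < A) :
    p y - p z ≤ A * (1 - p y) + (A / 4 + 1 / A + 1) * ∑ i, p i * log (p i / q i) := by
  set f : ι → ℝ := fun i => p i * log (p i / q i) + q i - p i
  have hf0 : ∀ i, 0 ≤ f i := fun i => mul_log_div_add_sub_nonneg (hp i) (hq i) (hpq i)
  have hD : ∑ i, p i * log (p i / q i) = ∑ i, f i := by
    simp only [f, sum_sub_distrib, sum_add_distrib, hp1, hq1]; ring
  have hpy : p y ≤ 1 := hp1 ▸ single_le_sum (fun i _ => hp i) (mem_univ y)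
  rw [hD]
  refine le_mul_add_of_sq_le hA (by linarith) (sum_nonneg fun i _ => hf0 i) fun ht => ?_
  rcases eq_or_ne y z with rfl | hne
  · have := sum_nonneg fun i (_ : i ∈ univ) => hf0 i
    nlinarith
  have pair {g : ι → ℝ} (hg : ∀ i, 0 ≤ g i) : g y + g z ≤ ∑ i, g i :=
    add_le_sum (fun i _ => hg i) (mem_univ y) (mem_univ z) hne
  exact sub_sq_le_of_two_point (hp y) (hp z) (hp1 ▸ pair hp) (hq y) hyz (hq1 ▸ pair hq)
    (hf0 y) (hf0 z) (three_mul_sq_sub_le (hp y) (hq y) (hpq y))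
    (three_mul_sq_sub_le (hp z) (hq z) (hpq z)) (pair hf0) ht

section Sequences

variable {A : Type} [Fintype A]

lemma condP_nonneg {ρ : List A → ℝ} (hρ : ∀ l, 0 ≤ ρ l) (l : List A) (a : A) :
    0 ≤ condP ρ l a :=
  div_nonneg (hρ _) (hρ _)

lemma sum_condP {ρ : List A → ℝ} {l : List A} (hc : ∑ a, ρ (l ++ [a]) = ρ l) (hl : ρ l ≠ 0) :
    ∑ a, condP ρ l a = 1 := by
  simp only [condP, ← sum_div, hc, div_self hl]

lemma condP_pos_of_condP_pos {μ ξ : List A → ℝ} (hμ : ∀ l, 0 ≤ μ l)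
    (hdom : ∀ l, 0 < μ l → 0 < ξ l) {l : List A} {a : A} (h : 0 < condP μ l a) :
    0 < condP ξ l a := by
  obtain ⟨ha, hl⟩ := (div_pos_iff.1 h).resolve_right fun h => (hμ l).not_gt h.2
  exact div_pos (hdom _ ha) (hdom _ hl)

theorem mul_one_sub_condP_le {μ ξ : List A → ℝ} (hμ : ∀ l, 0 ≤ μ l) (hξ : ∀ l, 0 ≤ ξ l)
    (hμc : ∀ l, ∑ a, μ (l ++ [a]) = μ l) (hξc : ∀ l, ∑ a, ξ (l ++ [a]) = ξ l)
    (hdom : ∀ l, 0 < μ l → 0 < ξ l) (l : List A) {y z : A}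
    (hyz : condP ξ l y ≤ condP ξ l z) {Ac : ℝ} (hA : 0 < Ac) :
    μ l * (1 - condP μ l z) ≤ (Ac + 1) * (μ l * (1 - condP μ l y)) +
      (Ac / 4 + 1 / Ac + 1) *
        (μ l * ∑ a, condP μ l a * log (condP μ l a / condP ξ l a)) := by
  rcases (hμ l).eq_or_lt with h0 | hpos
  · simp [← h0]
  have := sub_le_mul_one_sub_add_mul_sum_log (condP_nonneg hμ l) (condP_nonneg hξ l)
    (sum_condP (hμc l) hpos.ne') (sum_condP (hξc l) (hdom l hpos).ne')
    (fun _ => condP_pos_of_condP_pos hμ hdom) hyz hA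
  nlinarith [mul_le_mul_of_nonneg_left this hpos.le]

lemma apply_le_apply_nil {ρ : List A → ℝ} (hρ : ∀ l, 0 ≤ ρ l)
    (hc : ∀ l, ∑ a, ρ (l ++ [a]) = ρ l) (l : List A) : ρ l ≤ ρ [] := by
  induction l using List.reverseRecOn with
  | nil => rfl
  | append_singleton l a ih =>
    exact ((hc l) ▸ single_le_sum (fun b _ => hρ (l ++ [b])) (mem_univ a)).trans ih

lemma sum_tsum_mul_append {μs : ℕ → List A → ℝ} {w : ℕ → ℝ}
    (hsum : ∀ l, Summable fun i => w i * μs i l) (hc : ∀ i l, ∑ a, μs i (l ++ [a]) = μs i l)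
    (l : List A) : ∑ a, ∑' i, w i * μs i (l ++ [a]) = ∑' i, w i * μs i l := by
  rw [← Summable.tsum_finsetSum fun a _ => hsum (l ++ [a])]
  simp only [← mul_sum, hc]

end Sequences

theorem linear_error_bound_general {A : Type} [Fintype A]
    (μs : ℕ → List A → ℝ) (w : ℕ → ℝ)
    (hwpos : ∀ i, 0 < w i) (hwsum : HasSum w 1)
    (hnn : ∀ i l, 0 ≤ μs i l)
    (hroot : ∀ i, μs i [] = 1)
    (hcompat : ∀ i l, ∑ a : A, μs i (l ++ [a]) = μs i l)
    (ξ : List A → ℝ) (hξ : ∀ l, ξ l = ∑' i, w i * μs i l)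
    (i0 : ℕ)
    (predμ predξ : List A → A)
    (hpredξ : ∀ l a, condP ξ l a ≤ condP ξ l (predξ l))
    (Ac Bc : ℝ) (hA : 0 < Ac) (hB : Bc = Ac / 4 + 1 / Ac) :
    ∀ n : ℕ, errE (μs i0) predξ n ≤
      (Ac + 1) * errE (μs i0) predμ n + (Bc + 1) * relEnt (μs i0) ξ n := by
  subst hB
  have hle : ∀ i l, μs i l ≤ 1 := fun i l =>
    (apply_le_apply_nil (hnn i) (hcompat i) l).trans_eq (hroot i)
  have hsum : ∀ l, Summable fun i => w i * μs i l := fun l =>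
    hwsum.summable.of_nonneg_of_le (fun i => mul_nonneg (hwpos i).le (hnn i l))
      fun i => mul_le_of_le_one_right (hwpos i).le (hle i l)
  have hξnn : ∀ l, 0 ≤ ξ l := fun l =>
    (hξ l).symm ▸ tsum_nonneg fun i => mul_nonneg (hwpos i).le (hnn i l)
  have hξc : ∀ l, ∑ a, ξ (l ++ [a]) = ξ l := fun l => by
    simp only [hξ]; exact sum_tsum_mul_append hsum hcompat l
  have hdom : ∀ l, 0 < μs i0 l → 0 < ξ l := fun l h =>
    (hξ l).symm ▸ (hsum l).tsum_pos (fun i => mul_nonneg (hwpos i).le (hnn i l)) i0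
      (mul_pos (hwpos i0) h)
  intro n
  unfold errE relEnt
  rw [mul_sum, mul_sum, ← sum_add_distrib]
  gcongr with k
  rw [mul_sum, mul_sum, ← sum_add_distrib]
  gcongr with x
  exact mul_one_sub_condP_le (hnn i0) hξnn (hcompat i0) hξc hdom _ (hpredξ _ (predμ _)) hA

/-- Linear error bound: for A > 0 and B = A/4 + 1/A, the expected errors of the
universal predictor Θ_ξ satisfy E_{nΘ_ξ} ≤ (A+1) E_{nΘ_μ} + (B+1) H_n. -/
theorem linear_error_bound {A : Type} [Fintype A]
    (μs : ℕ → List A → ℝ) (w : ℕ → ℝ)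
    (hwpos : ∀ i, 0 < w i) (hwsum : HasSum w 1)
    (hnn : ∀ i l, 0 ≤ μs i l)
    (hroot : ∀ i, μs i [] = 1)
    (hcompat : ∀ i l, ∑ a : A, μs i (l ++ [a]) = μs i l)
    (ξ : List A → ℝ) (hξ : ∀ l, ξ l = ∑' i, w i * μs i l)
    (i0 : ℕ)
    (predμ predξ : List A → A)
    (hpredμ : ∀ l a, condP (μs i0) l a ≤ condP (μs i0) l (predμ l))
    (hpredξ : ∀ l a, condP ξ l a ≤ condP ξ l (predξ l))
    (Ac Bc : ℝ) (hA : 0 < Ac) (hB : Bc = Ac / 4 + 1 / Ac) :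
    ∀ n : ℕ, errE (μs i0) predξ n ≤
      (Ac + 1) * errE (μs i0) predμ n + (Bc + 1) * relEnt (μs i0) ξ n :=
  linear_error_bound_general μs w hwpos hwsum hnn hroot hcompat ξ hξ i0 predμ predξ hpredξ Ac Bc hA
    hB
end

section
/- (Finite errors in deterministic environments) If μ is deterministic (assigns probability 1 to a single infinite sequence), then the universal predictor Θ_ξ makes at most 2·ln(1/w_μ) expected errors in total: E_{∞Θ_ξ} ≤ 2·H_∞ ≤ 2·ln(1/w_μ). -/
open scoped BigOperators Classical

/-! Under the Dirac measure on `ω` only the prefixes of `ω` carry mass, so the error count is the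
number of steps `k` at which `predξ` misses `ω k`, and `H_n` is `∑ₖ -log ξ(ω k | ω<k)`, which
telescopes to `-log ξ(ω<n) ≤ log (1 / w i0)` by the dominance `w i0 • μ ≤ ξ`. At a miss, `ω k` is
not the `ξ`-argmax, so its conditional probability is at most `1/2` and the step contributes at
least `log 2 > 1/2` to `H_n`. -/

/-- The values on cylinder sets of a probability measure on infinite sequences over `A`. -/
structure IsSeqMeasure {A : Type} [Fintype A] (μ : List A → ℝ) : Prop where
  nonneg : ∀ l, 0 ≤ μ l
  apply_nil : μ [] = 1
  sum_append_singleton : ∀ l, ∑ a : A, μ (l ++ [a]) = μ l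

namespace IsSeqMeasure

variable {A : Type} [Fintype A]

theorem le_one {μ : List A → ℝ} (hμ : IsSeqMeasure μ) (l : List A) : μ l ≤ 1 := by
  induction l using List.reverseRecOn with
  | nil => exact hμ.apply_nil.le
  | append_singleton l a ih =>
    calc μ (l ++ [a]) ≤ ∑ b : A, μ (l ++ [b]) :=
          Finset.single_le_sum (fun b _ => hμ.nonneg (l ++ [b])) (Finset.mem_univ a)
      _ = μ l := hμ.sum_append_singleton l
      _ ≤ 1 := ih

theorem condP_nonneg {μ : List A → ℝ} (hμ : IsSeqMeasure μ) (l : List A) (a : A) :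
    0 ≤ condP μ l a :=
  div_nonneg (hμ.nonneg _) (hμ.nonneg l)

theorem sum_condP {μ : List A → ℝ} (hμ : IsSeqMeasure μ) {l : List A} (hl : μ l ≠ 0) :
    ∑ a : A, condP μ l a = 1 := by
  simp only [condP, ← Finset.sum_div, hμ.sum_append_singleton, div_self hl]

section Mixture

variable {μs : ℕ → List A → ℝ} {w : ℕ → ℝ}

theorem summable_mul (hw : ∀ i, 0 ≤ w i) (hw1 : HasSum w 1) (hμs : ∀ i, IsSeqMeasure (μs i))
    (l : List A) : Summable fun i => w i * μs i l :=
  Summable.of_nonneg_of_le (fun i => mul_nonneg (hw i) ((hμs i).nonneg l))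
    (fun i => mul_le_of_le_one_right (hw i) ((hμs i).le_one l)) hw1.summable

theorem mul_le_tsum_mul (hw : ∀ i, 0 ≤ w i) (hw1 : HasSum w 1)
    (hμs : ∀ i, IsSeqMeasure (μs i)) (i : ℕ) (l : List A) :
    w i * μs i l ≤ ∑' j, w j * μs j l :=
  (summable_mul hw hw1 hμs l).le_tsum i fun j _ => mul_nonneg (hw j) ((hμs j).nonneg l)

theorem tsum_mul (hw : ∀ i, 0 ≤ w i) (hw1 : HasSum w 1) (hμs : ∀ i, IsSeqMeasure (μs i)) :
    IsSeqMeasure fun l => ∑' i, w i * μs i l where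
  nonneg l := tsum_nonneg fun i => mul_nonneg (hw i) ((hμs i).nonneg l)
  apply_nil := by simpa only [(hμs _).apply_nil, mul_one] using hw1.tsum_eq
  sum_append_singleton l := by
    rw [← Summable.tsum_finsetSum fun a _ => summable_mul hw hw1 hμs _]
    simp only [← Finset.mul_sum, (hμs _).sum_append_singleton]

end Mixture

end IsSeqMeasure

theorem ite_ne_le_two_mul_neg_log {A : Type} [Fintype A] {p : A → ℝ} (hp0 : ∀ a, 0 ≤ p a)
    (hp1 : ∑ a, p a = 1) {b c : A} (hb : ∀ a, p a ≤ p b) (hc : 0 < p c) :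
    (if b = c then 0 else 1 : ℝ) ≤ 2 * -Real.log (p c) := by
  have hle_one : p c ≤ 1 := hp1 ▸ Finset.single_le_sum (fun a _ => hp0 a) (Finset.mem_univ c)
  split_ifs with hbc
  · linarith [Real.log_nonpos hc.le hle_one]
  · have hpair : p c + p b ≤ 1 := by
      rw [← hp1, ← Finset.sum_pair (Ne.symm hbc)]
      exact Finset.sum_le_sum_of_subset_of_nonneg (Finset.subset_univ _) fun a _ _ => hp0 a
    have hhalf : p c ≤ 2⁻¹ := by linarith [hb c]
    have hlog : Real.log (p c) ≤ -Real.log 2 := by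
      simpa only [Real.log_inv] using Real.log_le_log hc hhalf
    linarith [Real.log_two_gt_d9]

section Deterministic

variable {A : Type}

def seqPrefix (ω : ℕ → A) (k : ℕ) : List A := List.ofFn fun i : Fin k => ω i

noncomputable def diracSeq (ω : ℕ → A) (l : List A) : ℝ :=
  if l = seqPrefix ω l.length then 1 else 0

theorem seqPrefix_succ (ω : ℕ → A) (k : ℕ) : seqPrefix ω (k + 1) = seqPrefix ω k ++ [ω k] := by
  rw [seqPrefix, List.ofFn_succ']
  simp [seqPrefix]

theorem diracSeq_ofFn {k : ℕ} (ω : ℕ → A) (x : Fin k → A) :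
    diracSeq ω (List.ofFn x) = if x = (fun i : Fin k => ω i) then 1 else 0 := by
  simp [diracSeq, seqPrefix, List.ofFn_inj]

theorem diracSeq_seqPrefix (ω : ℕ → A) (k : ℕ) : diracSeq ω (seqPrefix ω k) = 1 := by
  simp [seqPrefix, diracSeq_ofFn]

theorem diracSeq_seqPrefix_append (ω : ℕ → A) (k : ℕ) (a : A) :
    diracSeq ω (seqPrefix ω k ++ [a]) = if a = ω k then 1 else 0 := by
  have hlen : (seqPrefix ω k ++ [a]).length = k + 1 := by simp [seqPrefix]
  rw [diracSeq, hlen, seqPrefix_succ]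
  simp

variable [Fintype A]

theorem condP_diracSeq_seqPrefix (ω : ℕ → A) (k : ℕ) (a : A) :
    condP (diracSeq ω) (seqPrefix ω k) a = if a = ω k then 1 else 0 := by
  rw [condP, diracSeq_seqPrefix, div_one, diracSeq_seqPrefix_append]

theorem sum_ofFn_diracSeq_mul (ω : ℕ → A) (k : ℕ) (f : List A → ℝ) :
    ∑ x : Fin k → A, diracSeq ω (List.ofFn x) * f (List.ofFn x) = f (seqPrefix ω k) := by
  simp [diracSeq_ofFn, seqPrefix]

theorem errE_diracSeq (ω : ℕ → A) (p : List A → A) (n : ℕ) :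
    errE (diracSeq ω) p n =
      ∑ k ∈ Finset.range n, if p (seqPrefix ω k) = ω k then 0 else 1 := by
  refine Finset.sum_congr rfl fun k _ => ?_
  rw [sum_ofFn_diracSeq_mul ω k fun l => 1 - condP (diracSeq ω) l (p l),
    condP_diracSeq_seqPrefix]
  split_ifs <;> norm_num

theorem relEnt_diracSeq (ω : ℕ → A) (ξ : List A → ℝ) (n : ℕ) :
    relEnt (diracSeq ω) ξ n =
      ∑ k ∈ Finset.range n, -Real.log (condP ξ (seqPrefix ω k) (ω k)) := by
  refine Finset.sum_congr rfl fun k _ => ?_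
  rw [sum_ofFn_diracSeq_mul ω k fun l => ∑ a : A,
    condP (diracSeq ω) l a * Real.log (condP (diracSeq ω) l a / condP ξ l a)]
  simp [condP_diracSeq_seqPrefix, Real.log_inv]

theorem sum_neg_log_condP_seqPrefix {ξ : List A → ℝ} (hξ : ξ [] = 1) (ω : ℕ → A)
    (hpos : ∀ k, ξ (seqPrefix ω k) ≠ 0) (n : ℕ) :
    ∑ k ∈ Finset.range n, -Real.log (condP ξ (seqPrefix ω k) (ω k)) =
      -Real.log (ξ (seqPrefix ω n)) := by
  have hstep (k : ℕ) : -Real.log (condP ξ (seqPrefix ω k) (ω k)) =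
      Real.log (ξ (seqPrefix ω k)) - Real.log (ξ (seqPrefix ω (k + 1))) := by
    rw [condP, ← seqPrefix_succ, Real.log_div (hpos _) (hpos _)]
    ring
  rw [Finset.sum_congr rfl fun k _ => hstep k, Finset.sum_range_sub']
  simp [seqPrefix, hξ]

end Deterministic

/-- Finite errors in deterministic environments: if μ is concentrated on a single
sequence ω, then the universal predictor makes at most 2 H_n ≤ 2 ln(1/w_μ)
expected errors, uniformly in n. -/
theorem deterministic_error_bound {A : Type} [Fintype A]
    (μs : ℕ → List A → ℝ) (w : ℕ → ℝ)
    (hwpos : ∀ i, 0 < w i) (hwsum : HasSum w 1)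
    (hnn : ∀ i l, 0 ≤ μs i l)
    (hroot : ∀ i, μs i [] = 1)
    (hcompat : ∀ i l, ∑ a : A, μs i (l ++ [a]) = μs i l)
    (ξ : List A → ℝ) (hξ : ∀ l, ξ l = ∑' i, w i * μs i l)
    (i0 : ℕ)
    (ω : ℕ → A)
    (hdet : ∀ l : List A,
      μs i0 l = if l = List.ofFn (fun i : Fin l.length => ω i) then 1 else 0)
    (predξ : List A → A)
    (hpredξ : ∀ l a, condP ξ l a ≤ condP ξ l (predξ l)) :
    ∀ n : ℕ, errE (μs i0) predξ n ≤ 2 * relEnt (μs i0) ξ n ∧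
      2 * relEnt (μs i0) ξ n ≤ 2 * Real.log (1 / w i0) := by
  have hμs (i : ℕ) : IsSeqMeasure (μs i) := ⟨hnn i, hroot i, hcompat i⟩
  have hw (i : ℕ) : 0 ≤ w i := (hwpos i).le
  have hξm : IsSeqMeasure ξ := funext hξ ▸ IsSeqMeasure.tsum_mul hw hwsum hμs
  have hdirac : μs i0 = diracSeq ω := funext hdet
  have hw_le (k : ℕ) : w i0 ≤ ξ (seqPrefix ω k) := by
    have := IsSeqMeasure.mul_le_tsum_mul hw hwsum hμs i0 (seqPrefix ω k)
    rwa [← hξ, hdirac, diracSeq_seqPrefix, mul_one] at this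
  have hξpos (k : ℕ) : 0 < ξ (seqPrefix ω k) := (hwpos i0).trans_le (hw_le k)
  intro n
  rw [hdirac, errE_diracSeq, relEnt_diracSeq]
  constructor
  · rw [Finset.mul_sum]
    gcongr with k
    have hcondP_pos : 0 < condP ξ (seqPrefix ω k) (ω k) :=
      div_pos (seqPrefix_succ ω k ▸ hξpos (k + 1)) (hξpos k)
    exact ite_ne_le_two_mul_neg_log (hξm.condP_nonneg _) (hξm.sum_condP (hξpos k).ne')
      (hpredξ _) hcondP_pos
  · rw [sum_neg_log_condP_seqPrefix hξm.apply_nil ω (fun k => (hξpos k).ne'), one_div,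
      Real.log_inv]
    gcongr
    · exact hwpos i0
    · exact hw_le n
end
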